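/- (Bounds on the effective constant.) Let c : ℝⁿ → ℝ be continuous and ℤⁿ-periodic, and let F(X,p,y) := −tr{(I_n − (p⊗p)/(1+|p|²))X} − c(y)√(1+|p|²). Fix p ∈ ℝⁿ. Suppose v ∈ C²(ℝⁿ) is ℤⁿ-periodic and μ ∈ ℝ satisfies F(D²v, p+Dv, y) = μ for all y ∈ ℝⁿ. Then −(max_{ℝⁿ} c)·√(1+|p|²) ≤ μ ≤ −(min_{ℝⁿ} c)·√(1+|p|²). -/

import Mathlib

open Set

noncomputable section

/-- Spatial gradient of `f : ℝⁿ → ℝ` as a Euclidean vector. -/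
def sgrad (n : ℕ) (f : EuclideanSpace ℝ (Fin n) → ℝ) (x : EuclideanSpace ℝ (Fin n)) :
    EuclideanSpace ℝ (Fin n) :=
  (EuclideanSpace.equiv (Fin n) ℝ).symm fun i => fderiv ℝ f x (EuclideanSpace.single i 1)

/-- Spatial Hessian of `f : ℝⁿ → ℝ` as an n×n matrix. -/
def shess (n : ℕ) (f : EuclideanSpace ℝ (Fin n) → ℝ) (x : EuclideanSpace ℝ (Fin n)) :
    Matrix (Fin n) (Fin n) ℝ :=
  fun i j => fderiv ℝ (fun y => fderiv ℝ f y (EuclideanSpace.single j 1)) x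
    (EuclideanSpace.single i 1)

/-- The coefficient matrix `a(p) = I_n − (p⊗p)/(1+|p|²)`. -/
def amat (n : ℕ) (p : EuclideanSpace ℝ (Fin n)) : Matrix (Fin n) (Fin n) ℝ :=
  fun i j => (if i = j then (1:ℝ) else 0) - p i * p j / (1 + ‖p‖ ^ 2)

/-- `F(X,p,y) = −tr{a(p)X} − c(y)√(1+|p|²)`. -/
def Fop (n : ℕ) (c : EuclideanSpace ℝ (Fin n) → ℝ) (X : Matrix (Fin n) (Fin n) ℝ)
    (p y : EuclideanSpace ℝ (Fin n)) : ℝ :=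
  -Matrix.trace (amat n p * X) - c y * Real.sqrt (1 + ‖p‖ ^ 2)

/-- `ℤⁿ`-periodicity. -/
def ZPeriodic (n : ℕ) (v : EuclideanSpace ℝ (Fin n) → ℝ) : Prop :=
  ∀ (y : EuclideanSpace ℝ (Fin n)) (k : Fin n → ℤ),
    v (y + (EuclideanSpace.equiv (Fin n) ℝ).symm fun i => (k i : ℝ)) = v y

/-!
By periodicity `v` attains its maximum at some `y₀`, where `Dv(y₀) = 0` and `D²v(y₀) ≤ 0`, so the
equation reads `μ = -tr(a(p) D²v(y₀)) - c(y₀)√(1+|p|²)`. Since `a(p) = I - p⊗p/(1+|p|²)` is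
positive semidefinite (by Cauchy–Schwarz), its trace against a negative semidefinite matrix is
nonpositive, giving `μ ≥ -c(y₀)√(1+|p|²) ≥ -(max c)√(1+|p|²)`. The upper bound is obtained in the
same way at a minimum point of `v`.
-/

open Matrix Filter Topology

theorem Matrix.PosSemidef.trace_mul_nonneg {ι : Type*} [Fintype ι] {A B : Matrix ι ι ℝ}
    (hA : A.PosSemidef) (hB : ∀ x, 0 ≤ x ⬝ᵥ (B *ᵥ x)) : 0 ≤ (A * B).trace := by
  obtain ⟨m, u, rfl⟩ := posSemidef_iff_eq_sum_vecMulVec.mp hA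
  simp only [Finset.sum_mul, trace_sum, vecMulVec_mul, trace_vecMulVec, star_trivial]
  exact Finset.sum_nonneg fun i _ => by
    simpa only [dotProduct_mulVec, dotProduct_comm] using hB (u i)

theorem posSemidef_amat (n : ℕ) (p : EuclideanSpace ℝ (Fin n)) : (amat n p).PosSemidef := by
  have hsymm : (amat n p).IsHermitian := by
    ext i j; simp only [amat, conjTranspose_apply, star_trivial, eq_comm (a := j)]; ring
  refine PosSemidef.of_dotProduct_mulVec_nonneg hsymm fun x => ?_
  have hamat : amat n p = 1 - (1 + ‖p‖ ^ 2)⁻¹ • vecMulVec p.ofLp p.ofLp := by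
    ext i j; simp [amat, one_apply, vecMulVec_apply, div_eq_inv_mul]
  have hnorm : ‖p‖ ^ 2 = p.ofLp ⬝ᵥ p.ofLp := by
    rw [EuclideanSpace.norm_sq_eq]; simp [dotProduct, sq]
  have hcs : (p.ofLp ⬝ᵥ x) ^ 2 ≤ (p.ofLp ⬝ᵥ p.ofLp) * (x ⬝ᵥ x) := by
    simpa only [dotProduct, sq] using Finset.sum_mul_sq_le_sq_mul_sq Finset.univ p.ofLp x
  have hx : 0 ≤ x ⬝ᵥ x := Finset.sum_nonneg fun i _ => mul_self_nonneg (x i)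
  rw [hamat, sub_mulVec, one_mulVec, smul_mulVec, vecMulVec_mulVec]
  simp only [star_trivial, dotProduct_sub, dotProduct_smul, smul_eq_mul, op_smul_eq_mul,
    dotProduct_comm x p.ofLp]
  rw [sub_nonneg, inv_mul_le_iff₀ (by positivity), hnorm]
  nlinarith

theorem IsLocalMax.deriv_deriv_nonpos {g : ℝ → ℝ} {x : ℝ} (h : IsLocalMax g x)
    (hc : ContinuousAt g x) : deriv (deriv g) x ≤ 0 := by
  by_contra! hpos
  have hconst : g =ᶠ[𝓝 x] fun _ => g x := by
    filter_upwards [h, isLocalMin_of_deriv_deriv_pos hpos h.deriv_eq_zero hc] with y hmax hmin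
    exact le_antisymm hmax hmin
  have hzero : deriv (deriv g) x = 0 := by
    rw [hconst.deriv.deriv_eq]; simp
  exact hpos.ne' hzero

theorem IsLocalMin.deriv_deriv_nonneg {g : ℝ → ℝ} {x : ℝ} (h : IsLocalMin g x)
    (hc : ContinuousAt g x) : 0 ≤ deriv (deriv g) x := by
  by_contra! hneg
  have hconst : g =ᶠ[𝓝 x] fun _ => g x := by
    filter_upwards [h, isLocalMax_of_deriv_deriv_neg hneg h.deriv_eq_zero hc] with y hmin hmax
    exact le_antisymm hmax hmin
  have hzero : deriv (deriv g) x = 0 := by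
    rw [hconst.deriv.deriv_eq]; simp
  exact hneg.ne hzero

section SecondOrder

variable {E : Type*} [NormedAddCommGroup E] [NormedSpace ℝ E] {x : E}

theorem deriv_deriv_comp_add_smul {F : Type*} [NormedAddCommGroup F] [NormedSpace ℝ F]
    {f : E → F} (hf : Differentiable ℝ f)
    (hf' : DifferentiableAt ℝ (fderiv ℝ f) x) (w : E) :
    deriv (deriv fun t : ℝ => f (x + t • w)) 0 = fderiv ℝ (fderiv ℝ f) x w w := by
  have hline : ∀ t : ℝ, HasDerivAt (fun t : ℝ => x + t • w) w t := fun t => by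
    simpa using ((hasDerivAt_id t).smul_const w).const_add x
  have hderiv : deriv (fun t : ℝ => f (x + t • w)) = fun t => fderiv ℝ f (x + t • w) w :=
    funext fun t => ((hf _).hasFDerivAt.comp_hasDerivAt t (hline t)).deriv
  rw [hderiv]
  have hf'0 : HasFDerivAt (fderiv ℝ f) (fderiv ℝ (fderiv ℝ f) x) (x + (0 : ℝ) • w) := by
    simpa using hf'.hasFDerivAt
  exact ((ContinuousLinearMap.apply ℝ F w).hasFDerivAt.comp_hasDerivAt 0
    (hf'0.comp_hasDerivAt 0 (hline 0))).deriv

theorem IsLocalMax.fderiv_fderiv_apply_self_nonpos {f : E → ℝ} (h : IsLocalMax f x)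
    (hf : Differentiable ℝ f) (hf' : DifferentiableAt ℝ (fderiv ℝ f) x) (w : E) :
    fderiv ℝ (fderiv ℝ f) x w w ≤ 0 := by
  have hline : Continuous fun t : ℝ => x + t • w := by fun_prop
  rw [← deriv_deriv_comp_add_smul hf hf' w]
  refine IsLocalMax.deriv_deriv_nonpos ?_ (hf.continuous.comp hline).continuousAt
  exact IsLocalMax.comp_continuous (by simpa using h) hline.continuousAt

theorem IsLocalMin.fderiv_fderiv_apply_self_nonneg {f : E → ℝ} (h : IsLocalMin f x)
    (hf : Differentiable ℝ f) (hf' : DifferentiableAt ℝ (fderiv ℝ f) x) (w : E) :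
    0 ≤ fderiv ℝ (fderiv ℝ f) x w w := by
  have hline : Continuous fun t : ℝ => x + t • w := by fun_prop
  rw [← deriv_deriv_comp_add_smul hf hf' w]
  refine IsLocalMin.deriv_deriv_nonneg ?_ (hf.continuous.comp hline).continuousAt
  exact IsLocalMin.comp_continuous (by simpa using h) hline.continuousAt

end SecondOrder

section Hessian

variable {n : ℕ} {f : EuclideanSpace ℝ (Fin n) → ℝ} {x : EuclideanSpace ℝ (Fin n)}

theorem shess_apply (hf' : DifferentiableAt ℝ (fderiv ℝ f) x) (i j : Fin n) :
    shess n f x i j =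
      fderiv ℝ (fderiv ℝ f) x (EuclideanSpace.single i 1) (EuclideanSpace.single j 1) := by
  have hcomp : (fun y => fderiv ℝ f y (EuclideanSpace.single j 1)) =
      ContinuousLinearMap.apply ℝ ℝ (EuclideanSpace.single j (1 : ℝ)) ∘ fderiv ℝ f := rfl
  rw [shess, hcomp, ((ContinuousLinearMap.apply ℝ ℝ _).hasFDerivAt.comp x hf'.hasFDerivAt).fderiv]
  rfl

theorem EuclideanSpace.toLp_eq_sum_single (w : Fin n → ℝ) :
    WithLp.toLp 2 w = ∑ i, w i • EuclideanSpace.single i (1 : ℝ) := by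
  simpa using ((EuclideanSpace.basisFun (Fin n) ℝ).sum_repr (WithLp.toLp 2 w)).symm

theorem dotProduct_shess_mulVec (hf' : DifferentiableAt ℝ (fderiv ℝ f) x) (w : Fin n → ℝ) :
    w ⬝ᵥ (shess n f x *ᵥ w) = fderiv ℝ (fderiv ℝ f) x (WithLp.toLp 2 w) (WithLp.toLp 2 w) := by
  simp only [EuclideanSpace.toLp_eq_sum_single w, map_sum, map_smul, FunLike.coe_sum,
    Finset.sum_apply, FunLike.coe_smul, Pi.smul_apply, smul_eq_mul, dotProduct, mulVec,
    shess_apply hf', Finset.mul_sum]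
  conv_rhs => rw [Finset.sum_comm]
  exact Finset.sum_congr rfl fun i _ => Finset.sum_congr rfl fun j _ => by ring

end Hessian

theorem ZPeriodic.isCompact_range {n : ℕ} {f : EuclideanSpace ℝ (Fin n) → ℝ} (hf : ZPeriodic n f)
    (hc : Continuous f) : IsCompact (range f) := by
  have hcube : IsCompact (WithLp.toLp 2 '' univ.pi fun _ : Fin n => Icc (0 : ℝ) 1) :=
    (isCompact_univ_pi fun _ => isCompact_Icc).image (PiLp.continuous_toLp 2 _)
  convert hcube.image hc using 1
  refine (image_subset_range _ _).antisymm' ?_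
  rintro _ ⟨y, rfl⟩
  refine ⟨_, ⟨fun i => Int.fract (y i), fun i _ => ⟨Int.fract_nonneg _, (Int.fract_lt_one _).le⟩,
    rfl⟩, ?_⟩
  have hy : y = WithLp.toLp 2 (fun i => Int.fract (y i)) +
      (EuclideanSpace.equiv (Fin n) ℝ).symm fun i => (⌊y i⌋ : ℝ) := by
    ext i; simp [Int.fract_add_floor]
  conv_rhs => rw [hy]
  exact (hf _ _).symm

section CriticalPoint

variable {n : ℕ} {v : EuclideanSpace ℝ (Fin n) → ℝ} {y : EuclideanSpace ℝ (Fin n)}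

theorem sgrad_eq_zero_of_fderiv_eq_zero (h : fderiv ℝ v y = 0) : sgrad n v y = 0 := by
  ext i; simp [sgrad, h]

theorem IsLocalMax.neg_mul_sqrt_le_Fop (h : IsLocalMax v y) (hv : Differentiable ℝ v)
    (hv' : DifferentiableAt ℝ (fderiv ℝ v) y) (c : EuclideanSpace ℝ (Fin n) → ℝ)
    (p : EuclideanSpace ℝ (Fin n)) :
    -c y * √(1 + ‖p‖ ^ 2) ≤ Fop n c (shess n v y) (p + sgrad n v y) y := by
  have htrace : 0 ≤ (amat n p * -shess n v y).trace :=
    (posSemidef_amat n p).trace_mul_nonneg fun w => by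
      rw [neg_mulVec, dotProduct_neg, dotProduct_shess_mulVec hv', neg_nonneg]
      exact h.fderiv_fderiv_apply_self_nonpos hv hv' _
  rw [Matrix.mul_neg, trace_neg] at htrace
  rw [Fop, sgrad_eq_zero_of_fderiv_eq_zero h.fderiv_eq_zero, add_zero]
  linarith

theorem IsLocalMin.Fop_le_neg_mul_sqrt (h : IsLocalMin v y) (hv : Differentiable ℝ v)
    (hv' : DifferentiableAt ℝ (fderiv ℝ v) y) (c : EuclideanSpace ℝ (Fin n) → ℝ)
    (p : EuclideanSpace ℝ (Fin n)) :
    Fop n c (shess n v y) (p + sgrad n v y) y ≤ -c y * √(1 + ‖p‖ ^ 2) := by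
  have htrace : 0 ≤ (amat n p * shess n v y).trace :=
    (posSemidef_amat n p).trace_mul_nonneg fun w => by
      rw [dotProduct_shess_mulVec hv']
      exact h.fderiv_fderiv_apply_self_nonneg hv hv' _
  rw [Fop, sgrad_eq_zero_of_fderiv_eq_zero h.fderiv_eq_zero, add_zero]
  linarith

end CriticalPoint

theorem stmt_9 (n : ℕ) (c : EuclideanSpace ℝ (Fin n) → ℝ)
    (hc : Continuous c) (hper : ZPeriodic n c) (p : EuclideanSpace ℝ (Fin n))
    (v : EuclideanSpace ℝ (Fin n) → ℝ) (hv : ContDiff ℝ 2 v) (hvper : ZPeriodic n v)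
    (μ : ℝ) (he : ∀ y, Fop n c (shess n v y) (p + sgrad n v y) y = μ) :
    -(sSup (Set.range c)) * Real.sqrt (1 + ‖p‖ ^ 2) ≤ μ ∧
      μ ≤ -(sInf (Set.range c)) * Real.sqrt (1 + ‖p‖ ^ 2) := by
  have hv₁ : Differentiable ℝ v := hv.differentiable (by norm_num)
  have hv₂ : Differentiable ℝ (fderiv ℝ v) :=
    (hv.fderiv_right (m := 1) (by norm_num)).differentiable one_ne_zero
  have hc_range := hper.isCompact_range hc
  have hv_range := hvper.isCompact_range hv.continuous
  obtain ⟨_, ⟨ymax, rfl⟩, hmax⟩ := hv_range.exists_isGreatest (range_nonempty v)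
  obtain ⟨_, ⟨ymin, rfl⟩, hmin⟩ := hv_range.exists_isLeast (range_nonempty v)
  have hlocmax : IsLocalMax v ymax := Eventually.of_forall fun y => hmax ⟨y, rfl⟩
  have hlocmin : IsLocalMin v ymin := Eventually.of_forall fun y => hmin ⟨y, rfl⟩
  constructor
  · calc -(sSup (range c)) * √(1 + ‖p‖ ^ 2) ≤ -c ymax * √(1 + ‖p‖ ^ 2) := by
          gcongr; exact le_csSup hc_range.bddAbove (mem_range_self _)
      _ ≤ μ := he ymax ▸ hlocmax.neg_mul_sqrt_le_Fop hv₁ (hv₂ _) c p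
  · calc μ ≤ -c ymin * √(1 + ‖p‖ ^ 2) := he ymin ▸ hlocmin.Fop_le_neg_mul_sqrt hv₁ (hv₂ _) c p
      _ ≤ -(sInf (range c)) * √(1 + ‖p‖ ^ 2) := by
          gcongr; exact csInf_le hc_range.bddBelow (mem_range_self _)
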